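/- With μ the triadic doubling measure as above and α in the range 1 − ln(2/(1−δ))/ln 3 < α < 1, the relative α-capacity satisfies Cap_α(E, I) ≥ c μ(E)/μ(I) for every triadic interval I ⊂ [0,1] and compact E ⊂ I; hence μ satisfies the fractional A_∞^α condition with η(t) = Ct. -/

import Mathlib

/-!
A descendant of generation `k + m` of a triadic interval `I` of generation `k` carries at most
`((1 - δ) / 2) ^ m μ(I)`, so a closed ball of radius `3 ^ (-(k + m))` — covered by three such
intervals — has mass at most `3 ((1 - δ) / 2) ^ m μ(I)` inside `I`. Cutting the kernel
`|x - y| ^ (α - 1)` along the shells `|x - y| ≈ 3 ^ (-(k + m))` bounds the potential of `μ|_I` by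
a geometric series of ratio `(1 - δ) / 2 · 3 ^ (1 - α)`, which is `< 1` exactly when
`α > 1 - log (2 / (1 - δ)) / log 3`; so `∫_I |x - y| ^ (α - 1) dμ(x) ≤ C μ(I) |I| ^ (α - 1)`
uniformly in `y`. For `h` admissible for `Cap_α(E; I)`, integrating `I_α h ≥ (diam 2I) ^ (α - 1)`
over `E` against `μ` and using Tonelli gives `μ(E) ≤ C' μ(I) ∫ h`.
-/

open MeasureTheory ENNReal

/-- The triadic interval `[j/3^k, (j+1)/3^k)` of generation `k`. -/
def triSet (k j : ℕ) : Set ℝ := Set.Ico ((j : ℝ) / 3 ^ k) (((j : ℝ) + 1) / 3 ^ k)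

/-- `μ` is the triadic measure with parameter `δ`: `μ([0,1]) = 1`, the middle triadic child
gets fraction `δ` of the mass of its parent, and each outer child gets `(1-δ)/2`. -/
def IsTriadicMeasure (μ : Measure ℝ) (δ : ℝ) : Prop :=
  μ (triSet 0 0) = 1 ∧
  ∀ k j : ℕ, j < 3 ^ k →
    μ (triSet (k + 1) (3 * j)) = ENNReal.ofReal ((1 - δ) / 2) * μ (triSet k j) ∧
    μ (triSet (k + 1) (3 * j + 1)) = ENNReal.ofReal δ * μ (triSet k j) ∧
    μ (triSet (k + 1) (3 * j + 2)) = ENNReal.ofReal ((1 - δ) / 2) * μ (triSet k j)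

/-- The double `2I` of the triadic interval `triSet k j`: same center, twice the length. -/
def triDouble (k j : ℕ) : Set ℝ :=
  Set.Ico (((j : ℝ) + 1 / 2) / 3 ^ k - ((3 : ℝ) ^ k)⁻¹)
    (((j : ℝ) + 1 / 2) / 3 ^ k + ((3 : ℝ) ^ k)⁻¹)

/-- The relative `α`-capacity `Cap_α(E; I)` where `S` is `2I` and `d = diam 2I`. -/
noncomputable def capacity (α : ℝ) (E S : Set ℝ) (d : ℝ) : ℝ≥0∞ :=
  ⨅ (h : ℝ → ℝ) (_ : ∀ y, 0 ≤ h y) (_ : Function.support h ⊆ S)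
    (_ : ∀ x ∈ E, d ^ (α - 1) ≤ ∫ y, |x - y| ^ (α - 1) * h y),
    ENNReal.ofReal (∫ y, h y)

section Capacity

variable {α : ℝ}

/-- Since `α ≤ 1`, the kernel `|x₀ - y| ^ (α - 1)` is bounded below on the bounded set `S`. -/
lemma integrable_of_integrable_abs_sub_rpow_mul {S : Set ℝ} {h : ℝ → ℝ} (hα : α ≤ 1)
    (hS : Bornology.IsBounded S) (hsupp : Function.support h ⊆ S) {x₀ : ℝ}
    (hint : Integrable fun y => |x₀ - y| ^ (α - 1) * h y) : Integrable h := by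
  obtain ⟨R, hR⟩ := hS.subset_closedBall x₀
  have hne : ∀ᵐ y : ℝ, y ≠ x₀ := by simp [ae_iff]
  have hcancel : ∀ y, y ≠ x₀ → |x₀ - y| ^ (1 - α) * (|x₀ - y| ^ (α - 1) * h y) = h y := by
    intro y hy
    rw [← mul_assoc, ← Real.rpow_add (abs_pos.2 (sub_ne_zero.2 hy.symm)), sub_add_sub_cancel,
      sub_self, Real.rpow_zero, one_mul]
  have hmeas : AEStronglyMeasurable h := by
    refine (((by fun_prop : Measurable fun y : ℝ => |x₀ - y| ^ (1 - α)).aestronglyMeasurable).mul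
      hint.aestronglyMeasurable).congr ?_
    filter_upwards [hne] with y hy using hcancel y hy
  refine (hint.norm.const_mul (R ^ (1 - α))).mono' hmeas ?_
  filter_upwards [hne] with y hy
  by_cases hy0 : h y = 0
  · simp [hy0]
  have hyR : |x₀ - y| ≤ R := by
    rw [abs_sub_comm, ← Real.dist_eq]; exact hR (hsupp hy0)
  calc ‖h y‖ = ‖|x₀ - y| ^ (1 - α) * (|x₀ - y| ^ (α - 1) * h y)‖ := by rw [hcancel y hy]
    _ = |x₀ - y| ^ (1 - α) * ‖|x₀ - y| ^ (α - 1) * h y‖ := by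
        rw [norm_mul, Real.norm_of_nonneg (by positivity)]
    _ ≤ R ^ (1 - α) * ‖|x₀ - y| ^ (α - 1) * h y‖ :=
        mul_le_mul_of_nonneg_right (Real.rpow_le_rpow (abs_nonneg _) hyR (sub_nonneg.2 hα))
          (norm_nonneg _)

lemma measure_le_mul_integral_of_lintegral_abs_sub_rpow_le {ν : Measure ℝ} {E S : Set ℝ}
    {d : ℝ} {B : ℝ≥0∞} {h : ℝ → ℝ} (hα : α ≤ 1) (hd : 0 < d) (hE : MeasurableSet E)
    (hνE : ν E ≠ ⊤) (hS : Bornology.IsBounded S)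
    (hνpot : ∀ y, ∫⁻ x in E, ENNReal.ofReal (|x - y| ^ (α - 1)) ∂ν ≤
      ENNReal.ofReal (d ^ (α - 1)) * B)
    (h0 : ∀ y, 0 ≤ h y) (hsupp : Function.support h ⊆ S)
    (hpot : ∀ x ∈ E, d ^ (α - 1) ≤ ∫ y, |x - y| ^ (α - 1) * h y) :
    ν E ≤ B * ENNReal.ofReal (∫ y, h y) := by
  rcases E.eq_empty_or_nonempty with rfl | ⟨x₀, hx₀⟩
  · simp
  have hd' : 0 < d ^ (α - 1) := Real.rpow_pos_of_pos hd _
  -- `h` need not be measurable, but a non-integrable potential would have Bochner integral `0`.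
  have hint : ∀ x ∈ E, Integrable fun y => |x - y| ^ (α - 1) * h y := fun x hx => by
    by_contra hni
    exact (hd'.trans_le (hpot x hx)).ne' (integral_undef hni)
  have hh := integrable_of_integrable_abs_sub_rpow_mul hα hS hsupp (hint x₀ hx₀)
  have : IsFiniteMeasure (ν.restrict E) := isFiniteMeasure_restrict.2 hνE
  have hlower : ∀ x ∈ E, ENNReal.ofReal (d ^ (α - 1)) ≤
      ∫⁻ y, ENNReal.ofReal (|x - y| ^ (α - 1)) * ENNReal.ofReal (h y) := fun x hx => by
    calc ENNReal.ofReal (d ^ (α - 1)) ≤ ENNReal.ofReal (∫ y, |x - y| ^ (α - 1) * h y) :=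
          ENNReal.ofReal_le_ofReal (hpot x hx)
      _ = _ := by
          rw [ofReal_integral_eq_lintegral_ofReal (hint x hx)
            (ae_of_all _ fun y => mul_nonneg (by positivity) (h0 y))]
          simp only [ENNReal.ofReal_mul (Real.rpow_nonneg (abs_nonneg _) _)]
  have hprod : AEMeasurable (Function.uncurry fun x y : ℝ =>
      ENNReal.ofReal (|x - y| ^ (α - 1)) * ENNReal.ofReal (h y)) ((ν.restrict E).prod volume) :=
    (Measurable.aemeasurable (by fun_prop)).mul
      hh.aestronglyMeasurable.comp_snd.aemeasurable.ennreal_ofReal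
  refine (ENNReal.mul_le_mul_iff_right (ENNReal.ofReal_pos.2 hd').ne'
    ENNReal.ofReal_ne_top).1 ?_
  calc ENNReal.ofReal (d ^ (α - 1)) * ν E
      = ∫⁻ _ in E, ENNReal.ofReal (d ^ (α - 1)) ∂ν := (setLIntegral_const _ _).symm
    _ ≤ ∫⁻ x in E, (∫⁻ y, ENNReal.ofReal (|x - y| ^ (α - 1)) * ENNReal.ofReal (h y)) ∂ν :=
        setLIntegral_mono' hE hlower
    _ = ∫⁻ y, ∫⁻ x in E, ENNReal.ofReal (|x - y| ^ (α - 1)) * ENNReal.ofReal (h y) ∂ν :=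
        lintegral_lintegral_swap hprod
    _ = ∫⁻ y, (∫⁻ x in E, ENNReal.ofReal (|x - y| ^ (α - 1)) ∂ν) * ENNReal.ofReal (h y) :=
        lintegral_congr fun y => lintegral_mul_const' _ _ ENNReal.ofReal_ne_top
    _ ≤ ∫⁻ y, ENNReal.ofReal (d ^ (α - 1)) * B * ENNReal.ofReal (h y) := by
        gcongr with y
        exact hνpot y
    _ = ENNReal.ofReal (d ^ (α - 1)) * (B * ENNReal.ofReal (∫ y, h y)) := by
        rw [lintegral_const_mul'' _ hh.aemeasurable.ennreal_ofReal,
          ofReal_integral_eq_lintegral_ofReal hh (ae_of_all _ h0), mul_assoc]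

end Capacity

lemma inv_pow_rpow {b : ℝ} (hb : 0 ≤ b) (α : ℝ) (n : ℕ) :
    ((b ^ n)⁻¹) ^ (α - 1) = (b ^ (1 - α)) ^ n := by
  rw [Real.inv_rpow (by positivity), ← Real.rpow_neg (by positivity), neg_sub,
    ← Real.rpow_natCast, ← Real.rpow_mul hb, mul_comm, Real.rpow_mul hb, Real.rpow_natCast]

lemma ofReal_abs_sub_rpow_le {α : ℝ} (hα : α < 1) (k : ℕ) (x y : ℝ) :
    ENNReal.ofReal (|x - y| ^ (α - 1)) ≤ ENNReal.ofReal (((3 : ℝ) ^ (1 - α)) ^ k) +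
      ∑' m : ℕ, (Metric.closedBall y ((3 : ℝ) ^ (k + m))⁻¹).indicator
        (fun _ => ENNReal.ofReal (((3 : ℝ) ^ (1 - α)) ^ (k + m + 1))) x := by
  have hexp : α - 1 ≤ 0 := by linarith
  have h3 : (0 : ℝ) < 3 ^ k := by positivity
  rcases (abs_nonneg (x - y)).eq_or_lt with h0 | hpos
  -- at `x = y` the kernel takes the junk value `0 ^ (α - 1) = 0`
  · rw [← h0, Real.zero_rpow (by linarith), ENNReal.ofReal_zero]
    exact zero_le
  by_cases hfar : ((3 : ℝ) ^ k)⁻¹ < |x - y|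
  · refine le_add_right (ENNReal.ofReal_le_ofReal ?_)
    rw [← inv_pow_rpow (by norm_num)]
    exact Real.rpow_le_rpow_of_nonpos (by positivity) hfar.le hexp
  obtain ⟨m, hlt, hle⟩ := exists_nat_pow_near_of_lt_one (mul_pos h3 hpos)
    ((le_inv_mul_iff₀ h3).1 (by rw [mul_one]; exact not_lt.1 hfar)) (by norm_num : (0 : ℝ) < 3⁻¹)
    (by norm_num)
  have hinv : ∀ n, ((3 : ℝ) ^ (k + n))⁻¹ = (3⁻¹) ^ n / 3 ^ k := fun n => by
    rw [pow_add, mul_inv, inv_pow, div_eq_mul_inv, mul_comm]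
  refine le_add_left (le_trans ?_ (ENNReal.le_tsum m))
  rw [Set.indicator_of_mem (by
    rw [Metric.mem_closedBall, Real.dist_eq, hinv, le_div_iff₀ h3, mul_comm]; exact hle)]
  apply ENNReal.ofReal_le_ofReal
  rw [← inv_pow_rpow (by norm_num), add_assoc]
  refine Real.rpow_le_rpow_of_nonpos (by positivity) ?_ hexp
  rw [hinv, div_le_iff₀ h3, mul_comm]
  exact hlt.le

lemma one_sub_div_two_mul_rpow_lt_one {δ α : ℝ} (hδ : δ < 1)
    (hα : 1 - Real.log (2 / (1 - δ)) / Real.log 3 < α) : (1 - δ) / 2 * 3 ^ (1 - α) < 1 := by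
  have h1 : 0 < 1 - δ := by linarith
  have hβ : (3 : ℝ) ^ (1 - α) < 2 / (1 - δ) := by
    rw [Real.rpow_lt_iff_lt_log (by norm_num) (by positivity)]
    rwa [sub_lt_comm, lt_div_iff₀ (Real.log_pos (by norm_num))] at hα
  calc (1 - δ) / 2 * 3 ^ (1 - α) < (1 - δ) / 2 * (2 / (1 - δ)) := by gcongr
    _ = 1 := by field_simp


-- `2 ^ (1 - α)` turns `|I| ^ (α - 1)` into `(diam 2I) ^ (α - 1)`; the rest sums the shells.
noncomputable def capConst (δ α : ℝ) : ℝ :=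
  2 ^ (1 - α) * (1 + 3 * 3 ^ (1 - α) / (1 - (1 - δ) / 2 * 3 ^ (1 - α)))

lemma capConst_pos {δ α : ℝ} (hρβ : (1 - δ) / 2 * 3 ^ (1 - α) < 1) : 0 < capConst δ α := by
  have := sub_pos.2 hρβ
  unfold capConst
  positivity

lemma mem_triSet_iff {k j : ℕ} {x : ℝ} : x ∈ triSet k j ↔ ⌊(3 : ℝ) ^ k * x⌋ = j := by
  have h3 : (0 : ℝ) < 3 ^ k := by positivity
  rw [Int.floor_eq_iff, triSet, Set.mem_Ico, div_le_iff₀' h3, lt_div_iff₀' h3]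
  push_cast
  rfl

lemma nonneg_of_mem_triSet {k j : ℕ} {x : ℝ} (hx : x ∈ triSet k j) : 0 ≤ x :=
  le_trans (by positivity) hx.1

lemma triSet_subset_triSet_div (k m i : ℕ) : triSet (k + m) i ⊆ triSet k (i / 3 ^ m) := by
  intro x hx
  rw [mem_triSet_iff] at hx ⊢
  have h : (3 : ℝ) ^ k * x = (3 : ℝ) ^ (k + m) * x / ((3 ^ m : ℕ) : ℝ) := by
    push_cast
    field_simp
    ring
  rw [h, Int.floor_div_natCast, hx]
  push_cast
  rfl

lemma triSet_subset_triDouble (k j : ℕ) : triSet k j ⊆ triDouble k j := by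
  intro x hx
  have h3 : (0 : ℝ) < 3 ^ k := by positivity
  obtain ⟨hl, hr⟩ := hx
  rw [triDouble, Set.mem_Ico]
  constructor
  · calc ((j : ℝ) + 1 / 2) / 3 ^ k - ((3 : ℝ) ^ k)⁻¹
          = (j : ℝ) / 3 ^ k - ((3 : ℝ) ^ k)⁻¹ / 2 := by ring
      _ ≤ x := by linarith [inv_pos.2 h3]
  · calc x < ((j : ℝ) + 1) / 3 ^ k := hr
      _ = ((j : ℝ) + 1 / 2) / 3 ^ k + ((3 : ℝ) ^ k)⁻¹ / 2 := by ring
      _ ≤ _ := by linarith [inv_pos.2 h3]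

lemma closedBall_inter_triSet_subset (n k j : ℕ) (y : ℝ) :
    Metric.closedBall y ((3 : ℝ) ^ n)⁻¹ ∩ triSet k j ⊆
      ⋃ t ∈ Finset.range 3, triSet n ((⌊(3 : ℝ) ^ n * y⌋ - 1).toNat + t) ∩ triSet k j := by
  rintro x ⟨hxy, hx⟩
  set b := ⌊(3 : ℝ) ^ n * y⌋
  set i := ⌊(3 : ℝ) ^ n * x⌋
  have h3 : (0 : ℝ) < 3 ^ n := by positivity
  have hi : 0 ≤ i := Int.floor_nonneg.2 (mul_nonneg h3.le (nonneg_of_mem_triSet hx))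
  have hxy' : |(3 : ℝ) ^ n * x - 3 ^ n * y| ≤ 1 := by
    rw [Metric.mem_closedBall, Real.dist_eq] at hxy
    calc |(3 : ℝ) ^ n * x - 3 ^ n * y| = 3 ^ n * |x - y| := by
          rw [← mul_sub, abs_mul, abs_of_pos h3]
      _ ≤ 3 ^ n * ((3 : ℝ) ^ n)⁻¹ := by gcongr
      _ = 1 := mul_inv_cancel₀ h3.ne'
  rw [abs_sub_le_iff] at hxy'
  have hib : i ≤ b + 1 := by
    rw [← Int.floor_add_one]; exact Int.floor_mono (by linarith)
  have hbi : b ≤ i + 1 := by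
    rw [← Int.floor_add_one]; exact Int.floor_mono (by linarith)
  simp only [Set.mem_iUnion, Finset.mem_range]
  refine ⟨i.toNat - (b - 1).toNat, by omega, ?_, hx⟩
  rw [show (b - 1).toNat + (i.toNat - (b - 1).toNat) = i.toNat by omega, mem_triSet_iff,
    Int.toNat_of_nonneg hi]

namespace IsTriadicMeasure

variable {μ : Measure ℝ} {δ α : ℝ}

lemma measure_triSet_succ_le (hμ : IsTriadicMeasure μ δ) (hδ : δ < 1 / 3) {k i : ℕ}
    (hi : i < 3 ^ (k + 1)) :
    μ (triSet (k + 1) i) ≤ ENNReal.ofReal ((1 - δ) / 2) * μ (triSet k (i / 3)) := by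
  obtain ⟨q, r, hr, rfl⟩ : ∃ q r, r < 3 ∧ i = 3 * q + r := ⟨i / 3, i % 3, by omega, by omega⟩
  rw [show (3 * q + r) / 3 = q by omega]
  obtain ⟨h0, h1, h2⟩ := hμ.2 k q (by rw [pow_succ] at hi; omega)
  interval_cases r
  · exact h0.le
  · exact h1.trans_le (by gcongr; linarith)
  · exact h2.le

lemma measure_triSet_add_le (hμ : IsTriadicMeasure μ δ) (hδ : δ < 1 / 3) (k : ℕ) :
    ∀ m i, i < 3 ^ (k + m) →
      μ (triSet (k + m) i) ≤ ENNReal.ofReal ((1 - δ) / 2) ^ m * μ (triSet k (i / 3 ^ m))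
  | 0, i, _ => by simp
  | m + 1, i, hi => by
    have hi' : i / 3 < 3 ^ (k + m) := by rw [← add_assoc, pow_succ] at hi; omega
    calc μ (triSet (k + m + 1) i)
        ≤ ENNReal.ofReal ((1 - δ) / 2) * μ (triSet (k + m) (i / 3)) :=
          measure_triSet_succ_le hμ hδ hi
      _ ≤ ENNReal.ofReal ((1 - δ) / 2) *
            (ENNReal.ofReal ((1 - δ) / 2) ^ m * μ (triSet k (i / 3 / 3 ^ m))) := by
          gcongr; exact measure_triSet_add_le hμ hδ k m _ hi'
      _ = ENNReal.ofReal ((1 - δ) / 2) ^ (m + 1) * μ (triSet k (i / 3 ^ (m + 1))) := by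
          rw [Nat.div_div_eq_div_mul, ← pow_succ', ← mul_assoc, ← pow_succ']

lemma measure_triSet_lt_top (hμ : IsTriadicMeasure μ δ) (hδ : δ < 1 / 3) {k j : ℕ}
    (hj : j < 3 ^ k) : μ (triSet k j) < ⊤ := by
  have h := measure_triSet_add_le hμ hδ 0 k j (by rwa [zero_add])
  rw [zero_add, Nat.div_eq_of_lt hj, hμ.1, mul_one] at h
  exact h.trans_lt (ENNReal.pow_lt_top ENNReal.ofReal_lt_top)

lemma measure_triSet_inter_le (hμ : IsTriadicMeasure μ δ) (hδ : δ < 1 / 3) {k j : ℕ}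
    (hj : j < 3 ^ k) (m i : ℕ) :
    μ (triSet (k + m) i ∩ triSet k j) ≤
      ENNReal.ofReal ((1 - δ) / 2) ^ m * μ (triSet k j) := by
  rcases (triSet (k + m) i ∩ triSet k j).eq_empty_or_nonempty with h | ⟨x, hxi, hxj⟩
  · simp [h]
  have hij : i / 3 ^ m = j := by
    have hx := triSet_subset_triSet_div k m i hxi
    rw [mem_triSet_iff] at hx hxj
    exact_mod_cast hx.symm.trans hxj
  have hi : i < 3 ^ (k + m) := by
    rw [pow_add]; exact (Nat.div_lt_iff_lt_mul (by positivity)).1 (hij ▸ hj)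
  calc _ ≤ μ (triSet (k + m) i) := measure_mono Set.inter_subset_left
    _ ≤ _ := hij ▸ measure_triSet_add_le hμ hδ k m i hi

lemma measure_closedBall_inter_triSet_le (hμ : IsTriadicMeasure μ δ) (hδ : δ < 1 / 3)
    {k j : ℕ} (hj : j < 3 ^ k) (m : ℕ) (y : ℝ) :
    μ (Metric.closedBall y ((3 : ℝ) ^ (k + m))⁻¹ ∩ triSet k j) ≤
      3 * (ENNReal.ofReal ((1 - δ) / 2) ^ m * μ (triSet k j)) := by
  calc _ ≤ μ (⋃ t ∈ Finset.range 3,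
          triSet (k + m) ((⌊(3 : ℝ) ^ (k + m) * y⌋ - 1).toNat + t) ∩ triSet k j) :=
        measure_mono (closedBall_inter_triSet_subset _ _ _ _)
    _ ≤ ∑ t ∈ Finset.range 3,
          μ (triSet (k + m) ((⌊(3 : ℝ) ^ (k + m) * y⌋ - 1).toNat + t) ∩ triSet k j) :=
        measure_biUnion_finset_le _ _
    _ ≤ ∑ _t ∈ Finset.range 3, ENNReal.ofReal ((1 - δ) / 2) ^ m * μ (triSet k j) :=
        Finset.sum_le_sum fun _ _ => measure_triSet_inter_le hμ hδ hj m _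
    _ = _ := by simp

lemma lintegral_abs_sub_rpow_le (hμ : IsTriadicMeasure μ δ) (hδ : δ < 1 / 3) (hα : α < 1)
    (hρβ : (1 - δ) / 2 * 3 ^ (1 - α) < 1) {k j : ℕ} (hj : j < 3 ^ k) (y : ℝ) :
    ∫⁻ x in triSet k j, ENNReal.ofReal (|x - y| ^ (α - 1)) ∂μ ≤
      ENNReal.ofReal ((1 + 3 * 3 ^ (1 - α) / (1 - (1 - δ) / 2 * 3 ^ (1 - α))) *
        (((3 : ℝ) ^ k)⁻¹) ^ (α - 1)) * μ (triSet k j) := by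
  have hβ : (0 : ℝ) < 3 ^ (1 - α) := by positivity
  have hρ : 0 < (1 - δ) / 2 := by linarith
  have hball := fun m => hμ.measure_closedBall_inter_triSet_le hδ hj m y
  refine (lintegral_mono fun x => ofReal_abs_sub_rpow_le hα k x y).trans ?_
  rw [inv_pow_rpow (by norm_num)]
  generalize (3 : ℝ) ^ (1 - α) = β at hβ hρβ ⊢
  generalize (1 - δ) / 2 = ρ at hρ hρβ hball ⊢
  have hr : 0 ≤ ρ * β := by positivity
  have hterm : ∀ m : ℕ, ENNReal.ofReal (β ^ (k + m + 1)) *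
      (3 * (ENNReal.ofReal ρ ^ m * μ (triSet k j))) =
        ENNReal.ofReal (3 * β ^ (k + 1) * (ρ * β) ^ m) * μ (triSet k j) := fun m => by
    rw [show 3 * β ^ (k + 1) * (ρ * β) ^ m = 3 * (β ^ (k + m + 1) * ρ ^ m) by ring,
      ENNReal.ofReal_mul (by norm_num), ENNReal.ofReal_mul (by positivity),
      ENNReal.ofReal_pow hρ.le, ENNReal.ofReal_ofNat]
    ring
  calc ∫⁻ x in triSet k j, (ENNReal.ofReal (β ^ k) +
          ∑' m : ℕ, (Metric.closedBall y ((3 : ℝ) ^ (k + m))⁻¹).indicator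
            (fun _ => ENNReal.ofReal (β ^ (k + m + 1))) x) ∂μ
      = ENNReal.ofReal (β ^ k) * μ (triSet k j) + ∑' m : ℕ, ENNReal.ofReal (β ^ (k + m + 1)) *
          μ (Metric.closedBall y ((3 : ℝ) ^ (k + m))⁻¹ ∩ triSet k j) := by
        rw [lintegral_add_left measurable_const, setLIntegral_const, lintegral_tsum fun m =>
          (measurable_const.indicator Metric.isClosed_closedBall.measurableSet).aemeasurable]
        simp only [lintegral_indicator_const Metric.isClosed_closedBall.measurableSet,
          Measure.restrict_apply Metric.isClosed_closedBall.measurableSet]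
    _ ≤ ENNReal.ofReal (β ^ k) * μ (triSet k j) + ∑' m : ℕ, ENNReal.ofReal (β ^ (k + m + 1)) *
          (3 * (ENNReal.ofReal ρ ^ m * μ (triSet k j))) := by
        gcongr with m
        exact hball m
    _ = ENNReal.ofReal ((1 + 3 * β / (1 - ρ * β)) * β ^ k) * μ (triSet k j) := by
        have h1 : 0 < 1 - ρ * β := by linarith
        simp only [hterm]
        rw [ENNReal.tsum_mul_right, ← ENNReal.ofReal_tsum_of_nonneg (fun m => by positivity)
          ((summable_geometric_of_lt_one hr hρβ).mul_left _), tsum_mul_left,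
          tsum_geometric_of_lt_one hr hρβ, ← add_mul, ← ENNReal.ofReal_add (by positivity)
          (by positivity)]
        congr 2
        rw [pow_succ]
        ring

lemma lintegral_abs_sub_rpow_le_diam (hμ : IsTriadicMeasure μ δ) (hδ : δ < 1 / 3) (hα : α < 1)
    (hρβ : (1 - δ) / 2 * 3 ^ (1 - α) < 1) {k j : ℕ} (hj : j < 3 ^ k) (y : ℝ) :
    ∫⁻ x in triSet k j, ENNReal.ofReal (|x - y| ^ (α - 1)) ∂μ ≤
      ENNReal.ofReal ((2 / 3 ^ k) ^ (α - 1)) *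
        (ENNReal.ofReal (capConst δ α) * μ (triSet k j)) := by
  refine (hμ.lintegral_abs_sub_rpow_le hδ hα hρβ hj y).trans_eq ?_
  rw [← mul_assoc, ← ENNReal.ofReal_mul (by positivity), div_eq_mul_inv (2 : ℝ),
    Real.mul_rpow (by norm_num) (by positivity), capConst]
  have h2 : (2 : ℝ) ^ (α - 1) * 2 ^ (1 - α) = 1 := by
    rw [← Real.rpow_add (by norm_num)]; simp
  congr 2
  linear_combination (-((1 + 3 * 3 ^ (1 - α) / (1 - (1 - δ) / 2 * 3 ^ (1 - α))) *
    (((3 : ℝ) ^ k)⁻¹) ^ (α - 1))) * h2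

lemma ofReal_inv_mul_div_le_capacity (hμ : IsTriadicMeasure μ δ) (hδ : δ < 1 / 3)
    (hα : α < 1) (hρβ : (1 - δ) / 2 * 3 ^ (1 - α) < 1) {k j : ℕ} (hj : j < 3 ^ k)
    {E : Set ℝ} (hE : E ⊆ triSet k j) (hEc : IsCompact E) :
    ENNReal.ofReal (capConst δ α)⁻¹ * (μ E / μ (triSet k j)) ≤
      capacity α E (triDouble k j) (2 / 3 ^ k) := by
  have hK := capConst_pos hρβ
  unfold capacity
  refine le_iInf fun h => le_iInf fun h0 => le_iInf fun hsupp => le_iInf fun hh => ?_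
  rw [ENNReal.ofReal_inv_of_pos hK,
    ENNReal.inv_mul_le_iff (ENNReal.ofReal_pos.2 hK).ne' ENNReal.ofReal_ne_top]
  refine ENNReal.div_le_of_le_mul ((measure_le_mul_integral_of_lintegral_abs_sub_rpow_le
    hα.le (by positivity) hEc.isClosed.measurableSet
    (ne_top_of_le_ne_top (hμ.measure_triSet_lt_top hδ hj).ne (measure_mono hE))
    (Metric.isBounded_Ico _ _)
    (fun y => (lintegral_mono_set hE).trans (hμ.lintegral_abs_sub_rpow_le_diam hδ hα hρβ hj y))
    h0 hsupp hh).trans_eq (mul_right_comm _ _ _))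

end IsTriadicMeasure

theorem stmt_17_general (μ : Measure ℝ) (δ : ℝ) (hδ : δ < 1 / 3)
    (hμ : IsTriadicMeasure μ δ) (α : ℝ)
    (hα1 : 1 - Real.log (2 / (1 - δ)) / Real.log 3 < α) (hα2 : α < 1) :
    (∃ c > (0:ℝ), ∀ k j : ℕ, j < 3 ^ k → ∀ E : Set ℝ, E ⊆ triSet k j → IsCompact E →
      ENNReal.ofReal c * (μ E / μ (triSet k j)) ≤
        capacity α E (triDouble k j) (2 / 3 ^ k)) ∧
    (∃ C > (0:ℝ), ∀ k j : ℕ, j < 3 ^ k → ∀ E : Set ℝ, E ⊆ triSet k j → IsCompact E →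
      μ E ≤ ENNReal.ofReal C * capacity α E (triDouble k j) (2 / 3 ^ k) *
        μ (triDouble k j)) := by
  have hρβ := one_sub_div_two_mul_rpow_lt_one (by linarith) hα1
  have hK := capConst_pos hρβ
  have hlower := fun k j (hj : j < 3 ^ k) E (hE : E ⊆ triSet k j) hEc =>
    hμ.ofReal_inv_mul_div_le_capacity hδ hα2 hρβ hj hE hEc
  refine ⟨⟨_, inv_pos.2 hK, hlower⟩, ⟨capConst δ α, hK, fun k j hj E hE hEc => ?_⟩⟩
  have hdiv := hlower k j hj E hE hEc
  rw [ENNReal.ofReal_inv_of_pos hK,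
    ENNReal.inv_mul_le_iff (ENNReal.ofReal_pos.2 hK).ne' ENNReal.ofReal_ne_top] at hdiv
  calc μ E ≤ μ E / μ (triSet k j) * μ (triSet k j) := by
        rcases eq_or_ne (μ (triSet k j)) 0 with h0 | h0
        · simp [measure_mono_null hE h0]
        · rw [ENNReal.div_mul_cancel h0 (hμ.measure_triSet_lt_top hδ hj).ne]
    _ ≤ _ := by
        gcongr
        exact triSet_subset_triDouble k j

/-- For the triadic measure `μ` and `1 - ln(2/(1-δ))/ln 3 < α < 1`, the
relative capacity satisfies `Cap_α(E,I) ≥ c μ(E)/μ(I)` for every triadic `I` and compact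
`E ⊆ I`; hence `μ` satisfies the fractional `A_∞^α` condition with `η(t) = C t`. -/
theorem stmt_17 (μ : Measure ℝ) (δ : ℝ) (hδ0 : 0 < δ) (hδ : δ < 1 / 3)
    (hμ : IsTriadicMeasure μ δ) (α : ℝ)
    (hα1 : 1 - Real.log (2 / (1 - δ)) / Real.log 3 < α) (hα2 : α < 1) :
    (∃ c > (0:ℝ), ∀ k j : ℕ, j < 3 ^ k → ∀ E : Set ℝ, E ⊆ triSet k j → IsCompact E →
      ENNReal.ofReal c * (μ E / μ (triSet k j)) ≤
        capacity α E (triDouble k j) (2 / 3 ^ k)) ∧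
    (∃ C > (0:ℝ), ∀ k j : ℕ, j < 3 ^ k → ∀ E : Set ℝ, E ⊆ triSet k j → IsCompact E →
      μ E ≤ ENNReal.ofReal C * capacity α E (triDouble k j) (2 / 3 ^ k) *
        μ (triDouble k j)) :=
  stmt_17_general μ δ hδ hμ α hα1 hα2
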